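/- arXiv:2305.09622 — 3 statements merged into one kernel-verified Lean document; each statement's English description precedes it below -/
import Mathlib

section
/- For every D > 1, λ > 0 and x₀ ∈ ℝ, the function U(x,y) = 2 log( 2λ / ((x-x₀)² + (y+Dλ)² - λ²) ) solves -ΔU = -2 e^U in the upper half-plane ℝ²₊ and ∂_ν U = 2D e^{U/2} on the boundary {y = 0}, where ∂_ν = -∂_y. -/
open Real Filter Topology

/-! Along every horizontal or vertical line the bubble has the form
`2 log (c / ((t - m)² + k))`, whose second derivative is `4 ((t - m)² - k) / ((t - m)² + k)²`.
Adding the two second derivatives at `(x, y)`, with `q = (x - x₀)² + (y + Dλ)² - λ²`, gives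
`8λ² / q² = 2 e^U`; likewise `-∂_y U = 4Dλ / q = 2D e^{U/2}` on `y = 0`. The hypothesis
`D > 1` keeps `q` positive on the closed half-plane. -/

/-- The standard bubble `U(x,y) = 2 log(2λ/((x-x₀)² + (y+Dλ)² - λ²))` on the half-plane. -/
noncomputable def bubble2 (D l x₀ : ℝ) (x y : ℝ) : ℝ :=
  2 * Real.log (2 * l / ((x - x₀) ^ 2 + (y + D * l) ^ 2 - l ^ 2))

section LogProfile

theorem hasDerivAt_sub_sq_add (m k p : ℝ) :
    HasDerivAt (fun t => (t - m) ^ 2 + k) (2 * (p - m)) p := by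
  simpa [mul_comm] using (((hasDerivAt_id' p).sub_const m).pow 2).add_const k

variable {c m k p : ℝ}

theorem hasDerivAt_two_mul_log_div_sub_sq_add (hc : c ≠ 0) (hQ : (p - m) ^ 2 + k ≠ 0) :
    HasDerivAt (fun t => 2 * log (c / ((t - m) ^ 2 + k)))
      (-4 * (p - m) / ((p - m) ^ 2 + k)) p := by
  have hquot := (hasDerivAt_const p c).fun_div (hasDerivAt_sub_sq_add m k p) hQ
  refine ((hquot.log (div_ne_zero hc hQ)).const_mul 2).congr_deriv ?_
  field_simp
  ring

theorem deriv_deriv_two_mul_log_div_sub_sq_add (hc : c ≠ 0) (hQ : (p - m) ^ 2 + k ≠ 0) :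
    deriv (fun s => deriv (fun t => 2 * log (c / ((t - m) ^ 2 + k))) s) p
      = 4 * ((p - m) ^ 2 - k) / ((p - m) ^ 2 + k) ^ 2 := by
  have hderiv : (fun s => deriv (fun t => 2 * log (c / ((t - m) ^ 2 + k))) s)
      =ᶠ[𝓝 p] fun s => -4 * (s - m) / ((s - m) ^ 2 + k) := by
    have hopen : IsOpen {s : ℝ | (s - m) ^ 2 + k ≠ 0} :=
      isOpen_ne_fun (by fun_prop) continuous_const
    filter_upwards [hopen.mem_nhds hQ] with s hs
    exact (hasDerivAt_two_mul_log_div_sub_sq_add hc hs).deriv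
  rw [hderiv.deriv_eq]
  refine ((((hasDerivAt_id' p).sub_const m).const_mul (-4)).fun_div
    (hasDerivAt_sub_sq_add m k p) hQ).deriv.trans ?_
  field_simp
  ring

end LogProfile

section Bubble

variable {D l x₀ : ℝ}

theorem bubble2_denom_pos (hD : 1 < D) (hl : 0 < l) (x : ℝ) {y : ℝ} (hy : 0 ≤ y) :
    0 < (x - x₀) ^ 2 + (y + D * l) ^ 2 - l ^ 2 := by
  have : l < y + D * l := by nlinarith
  nlinarith [sq_nonneg (x - x₀)]

theorem bubble2_eq_fun_x (y : ℝ) : (fun t => bubble2 D l x₀ t y)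
    = fun t => 2 * log (2 * l / ((t - x₀) ^ 2 + ((y + D * l) ^ 2 - l ^ 2))) := by
  funext t
  rw [bubble2, add_sub_assoc]

theorem bubble2_eq_fun_y (x : ℝ) : (fun t => bubble2 D l x₀ x t)
    = fun t => 2 * log (2 * l / ((t - -(D * l)) ^ 2 + ((x - x₀) ^ 2 - l ^ 2))) := by
  funext t
  rw [bubble2]
  ring_nf

theorem exp_half_bubble2 {x y : ℝ} (hl : 0 < l)
    (hq : 0 < (x - x₀) ^ 2 + (y + D * l) ^ 2 - l ^ 2) :
    exp (bubble2 D l x₀ x y / 2) = 2 * l / ((x - x₀) ^ 2 + (y + D * l) ^ 2 - l ^ 2) := by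
  rw [bubble2, mul_div_cancel_left₀ _ two_ne_zero, exp_log (by positivity)]

theorem exp_bubble2 {x y : ℝ} (hl : 0 < l) (hq : 0 < (x - x₀) ^ 2 + (y + D * l) ^ 2 - l ^ 2) :
    exp (bubble2 D l x₀ x y) = (2 * l / ((x - x₀) ^ 2 + (y + D * l) ^ 2 - l ^ 2)) ^ 2 := by
  rw [← exp_half_bubble2 hl hq, sq, ← exp_add, add_halves]

theorem bubble2_laplacian (hD : 1 < D) (hl : 0 < l) {x y : ℝ} (hy : 0 ≤ y) :
    deriv (fun s => deriv (fun t => bubble2 D l x₀ t y) s) x +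
        deriv (fun s => deriv (fun t => bubble2 D l x₀ x t) s) y =
      2 * exp (bubble2 D l x₀ x y) := by
  have hq := bubble2_denom_pos (x₀ := x₀) hD hl x hy
  have hqx :
      (x - x₀) ^ 2 + ((y + D * l) ^ 2 - l ^ 2) = (x - x₀) ^ 2 + (y + D * l) ^ 2 - l ^ 2 :=
    (add_sub_assoc ..).symm
  have hqy :
      (y - -(D * l)) ^ 2 + ((x - x₀) ^ 2 - l ^ 2) = (x - x₀) ^ 2 + (y + D * l) ^ 2 - l ^ 2 := by
    ring
  have hl2 : 2 * l ≠ 0 := by positivity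
  rw [bubble2_eq_fun_x, bubble2_eq_fun_y,
    deriv_deriv_two_mul_log_div_sub_sq_add hl2 (by rw [hqx]; exact hq.ne'),
    deriv_deriv_two_mul_log_div_sub_sq_add hl2 (by rw [hqy]; exact hq.ne'),
    hqx, hqy, exp_bubble2 hl hq]
  field_simp
  ring

theorem bubble2_neg_deriv_y_zero (hD : 1 < D) (hl : 0 < l) (x : ℝ) :
    -deriv (fun t => bubble2 D l x₀ x t) 0 = 2 * D * exp (bubble2 D l x₀ x 0 / 2) := by
  have hq := bubble2_denom_pos (x₀ := x₀) hD hl x le_rfl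
  have hq0 :
      (0 - -(D * l)) ^ 2 + ((x - x₀) ^ 2 - l ^ 2) = (x - x₀) ^ 2 + (0 + D * l) ^ 2 - l ^ 2 := by
    ring
  rw [bubble2_eq_fun_y, exp_half_bubble2 hl hq,
    (hasDerivAt_two_mul_log_div_sub_sq_add (by positivity) (by rw [hq0]; exact hq.ne')).deriv, hq0]
  field_simp
  ring

end Bubble

/-- For `D > 1`, `λ > 0`, `x₀ ∈ ℝ`, the bubble solves `-ΔU = -2 e^U` in the upper
half-plane and `∂_ν U = 2D e^{U/2}` on `{y = 0}`, where `∂_ν = -∂_y`. -/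
theorem bubble2_solves (D l x₀ : ℝ) (hD : 1 < D) (hl : 0 < l) :
    (∀ x y : ℝ, 0 < y →
      -(deriv (fun s => deriv (fun t => bubble2 D l x₀ t y) s) x +
          deriv (fun s => deriv (fun t => bubble2 D l x₀ x t) s) y) =
        -2 * Real.exp (bubble2 D l x₀ x y)) ∧
    (∀ x : ℝ, -(deriv (fun t => bubble2 D l x₀ x t) 0) =
        2 * D * Real.exp (bubble2 D l x₀ x 0 / 2)) :=
  ⟨fun _ _ hy => by rw [bubble2_laplacian hD hl hy.le]; ring,
    bubble2_neg_deriv_y_zero hD hl⟩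
end

section
/- For D > 1, ∫_{ℝ²₊} dx dy / (x² + (y+D)² - 1)² = (π/(2√(D²-1))) (D - √(D²-1)). -/
/-!
Integrate in `x` first. With `a = √((y + D)² - 1)`, the substitution `x = a t` and the
antiderivative `(arctan t + t / (1 + t²)) / 2` of `1 / (1 + t²)²` give
`∫ dx / (x² + a²)² = π / (2 a³)`. The remaining integral over `y > 0` has the antiderivative
`-(y + D) / √((y + D)² - 1)`, which tends to `-1`, so it equals
`π / 2 · (D / √(D² - 1) - 1)`.
Since the integrand is positive, integrability of the slices and of their integrals already
justifies exchanging the order of integration.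
-/

open MeasureTheory Real Filter Topology Set

section Prod

variable {α β : Type*} [MeasurableSpace α] [MeasurableSpace β]

theorem integral_prod_eq_integral_of_slices {μ : Measure α} {ν : Measure β} [SFinite μ]
    [SFinite ν] {f : α × β → ℝ} {g : β → ℝ}
    (hf : AEStronglyMeasurable f (μ.prod ν)) (hf₀ : 0 ≤ f)
    (hslice : ∀ᵐ y ∂ν, Integrable (fun x => f (x, y)) μ ∧ ∫ x, f (x, y) ∂μ = g y)
    (hg : Integrable g ν) :
    ∫ z, f z ∂μ.prod ν = ∫ y, g y ∂ν := by
  have hnorm : (fun y => ∫ x, ‖f (x, y)‖ ∂μ) =ᵐ[ν] g := by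
    filter_upwards [hslice] with y hy
    simp_rw [norm_of_nonneg (hf₀ _), hy.2]
  have hint : Integrable f (μ.prod ν) :=
    (integrable_prod_iff' hf).2 ⟨hslice.mono fun _ hy => hy.1, hg.congr hnorm.symm⟩
  rw [integral_prod_symm f hint]
  exact integral_congr_ae (hslice.mono fun _ hy => hy.2)

theorem Measure.prod_restrict_snd_preimage (μ : Measure α) (ν : Measure β) [SFinite μ]
    [SFinite ν] (s : Set β) :
    (μ.prod ν).restrict (Prod.snd ⁻¹' s) = μ.prod (ν.restrict s) := by
  rw [← univ_prod, ← Measure.prod_restrict, Measure.restrict_univ]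

end Prod

theorem hasDerivAt_arctan_add_div_one_add_sq (t : ℝ) :
    HasDerivAt (fun t => (arctan t + t / (1 + t ^ 2)) / 2) (1 / (1 + t ^ 2) ^ 2) t := by
  have hq : HasDerivAt (fun t : ℝ => 1 + t ^ 2) (2 * t) t := by
    simpa using (hasDerivAt_pow 2 t).const_add 1
  have h := ((hasDerivAt_arctan t).add ((hasDerivAt_id t).div hq (by positivity))).div_const 2
  refine h.congr_deriv ?_
  rw [id]
  field_simp
  ring

theorem tendsto_div_one_add_sq_cocompact :
    Tendsto (fun t : ℝ => t / (1 + t ^ 2)) (cocompact ℝ) (𝓝 0) := by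
  refine squeeze_zero_norm (fun t => ?_)
    (tendsto_inv_atTop_zero.comp tendsto_norm_cocompact_atTop)
  rcases eq_or_ne t 0 with rfl | ht
  · simp
  rw [norm_div, Real.norm_of_nonneg (by positivity : (0:ℝ) ≤ 1 + t ^ 2), Function.comp_apply,
    div_le_iff₀ (by positivity), Real.norm_eq_abs, ← div_eq_inv_mul,
    le_div_iff₀ (by positivity)]
  nlinarith [sq_abs t]

theorem integrable_one_div_one_add_sq_sq : Integrable fun t : ℝ => 1 / (1 + t ^ 2) ^ 2 := by
  refine integrable_inv_one_add_sq.mono'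
    (continuous_const.div (by fun_prop) fun t => by positivity).aestronglyMeasurable
    (.of_forall fun t => ?_)
  rw [Real.norm_of_nonneg (by positivity), one_div]
  exact inv_anti₀ (by positivity) (by nlinarith)

theorem integral_one_div_one_add_sq_sq : ∫ t : ℝ, 1 / (1 + t ^ 2) ^ 2 = π / 2 := by
  have hlim := tendsto_div_one_add_sq_cocompact
  rw [integral_of_hasDerivAt_of_tendsto hasDerivAt_arctan_add_div_one_add_sq
    integrable_one_div_one_add_sq_sq
    (((tendsto_arctan_atBot.mono_right nhdsWithin_le_nhds).add
      (hlim.mono_left atBot_le_cocompact)).div_const 2)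
    (((tendsto_arctan_atTop.mono_right nhdsWithin_le_nhds).add
      (hlim.mono_left atTop_le_cocompact)).div_const 2)]
  ring

theorem one_div_sq_add_sq_sq_eq {a : ℝ} (ha : a ≠ 0) (x : ℝ) :
    1 / (x ^ 2 + a ^ 2) ^ 2 = (a ^ 4)⁻¹ * (1 / (1 + (x / a) ^ 2) ^ 2) := by
  field_simp
  ring

theorem integrable_one_div_sq_add_sq_sq {a : ℝ} (ha : a ≠ 0) :
    Integrable fun x : ℝ => 1 / (x ^ 2 + a ^ 2) ^ 2 := by
  simp_rw [one_div_sq_add_sq_sq_eq ha]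
  exact (integrable_one_div_one_add_sq_sq.comp_div ha).const_mul _

theorem integral_one_div_sq_add_sq_sq {a : ℝ} (ha : 0 < a) :
    ∫ x : ℝ, 1 / (x ^ 2 + a ^ 2) ^ 2 = π / (2 * a ^ 3) := by
  simp_rw [one_div_sq_add_sq_sq_eq ha.ne', integral_const_mul,
    Measure.integral_comp_div (fun t => 1 / (1 + t ^ 2) ^ 2), integral_one_div_one_add_sq_sq,
    abs_of_pos ha, smul_eq_mul]
  field_simp

theorem hasDerivAt_neg_div_sqrt_sq_sub_one {u : ℝ} (hu : 1 < u) :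
    HasDerivAt (fun u => -(u / √(u ^ 2 - 1))) (√(u ^ 2 - 1) ^ 3)⁻¹ u := by
  have hpos : 0 < u ^ 2 - 1 := by nlinarith
  have hs : 0 < √(u ^ 2 - 1) := sqrt_pos.2 hpos
  have hq : HasDerivAt (fun u : ℝ => u ^ 2 - 1) (2 * u) u := by
    simpa using (hasDerivAt_pow 2 u).sub_const 1
  refine ((hasDerivAt_id u).div (hq.sqrt hpos.ne') hs.ne').neg.congr_deriv ?_
  rw [id]
  field_simp
  rw [sq_sqrt hpos.le]
  ring

theorem tendsto_div_sqrt_sq_sub_one_atTop :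
    Tendsto (fun u : ℝ => u / √(u ^ 2 - 1)) atTop (𝓝 1) := by
  have h : Tendsto (fun u : ℝ => (√(1 - (u ^ 2)⁻¹))⁻¹) atTop (𝓝 (√(1 - 0))⁻¹) :=
    ((tendsto_const_nhds.sub ((tendsto_pow_atTop two_ne_zero).inv_tendsto_atTop)).sqrt).inv₀
      (by norm_num)
  rw [sub_zero, sqrt_one, inv_one] at h
  refine h.congr' ?_
  filter_upwards [eventually_gt_atTop 1] with u hu
  rw [show 1 - (u ^ 2)⁻¹ = (u ^ 2 - 1) / u ^ 2 by field_simp, sqrt_div (by nlinarith),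
    sqrt_sq (by linarith), inv_div]

theorem integral_Ioi_inv_sqrt_sq_sub_one_pow_three {c : ℝ} (hc : 1 < c) :
    IntegrableOn (fun y => (√((y + c) ^ 2 - 1) ^ 3)⁻¹) (Ioi 0) ∧
    ∫ y in Ioi 0, (√((y + c) ^ 2 - 1) ^ 3)⁻¹ = c / √(c ^ 2 - 1) - 1 := by
  have hderiv : ∀ y ∈ Ici (0 : ℝ), HasDerivAt (fun y => -((y + c) / √((y + c) ^ 2 - 1)))
      (√((y + c) ^ 2 - 1) ^ 3)⁻¹ y := fun y hy =>
    (hasDerivAt_neg_div_sqrt_sq_sub_one (by linarith [hy.out])).comp_add_const y c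
  have hnonneg : ∀ y ∈ Ioi (0 : ℝ), 0 ≤ (√((y + c) ^ 2 - 1) ^ 3)⁻¹ := fun _ _ => by
    positivity
  have hlim : Tendsto (fun y => -((y + c) / √((y + c) ^ 2 - 1))) atTop (𝓝 (-1)) :=
    (tendsto_div_sqrt_sq_sub_one_atTop.comp (tendsto_atTop_add_const_right _ c tendsto_id)).neg
  refine ⟨integrableOn_Ioi_deriv_of_nonneg' hderiv hnonneg hlim, ?_⟩
  rw [integral_Ioi_of_hasDerivAt_of_nonneg' hderiv hnonneg hlim, zero_add]
  ring

/-- For `D > 1`, `∫_{ℝ²₊} dx dy/(x² + (y+D)² - 1)² = (π/(2√(D²-1)))(D - √(D²-1))`. -/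
theorem integral_halfplane_bubble (D : ℝ) (hD : 1 < D) :
    ∫ p in {p : ℝ × ℝ | 0 < p.2}, 1 / (p.1 ^ 2 + (p.2 + D) ^ 2 - 1) ^ 2 =
      π / (2 * Real.sqrt (D ^ 2 - 1)) * (D - Real.sqrt (D ^ 2 - 1)) := by
  obtain ⟨houter_int, houter⟩ := integral_Ioi_inv_sqrt_sq_sub_one_pow_three hD
  have hslice : ∀ y ∈ Ioi (0 : ℝ), Integrable (fun x => 1 / (x ^ 2 + (y + D) ^ 2 - 1) ^ 2) ∧
      ∫ x, 1 / (x ^ 2 + (y + D) ^ 2 - 1) ^ 2 = π / 2 * (√((y + D) ^ 2 - 1) ^ 3)⁻¹ := by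
    intro y hy
    have hpos : 0 < (y + D) ^ 2 - 1 := by nlinarith [hy.out]
    have ha : 0 < √((y + D) ^ 2 - 1) := sqrt_pos.2 hpos
    have hfun : (fun x => 1 / (x ^ 2 + (y + D) ^ 2 - 1) ^ 2) =
        fun x => 1 / (x ^ 2 + √((y + D) ^ 2 - 1) ^ 2) ^ 2 := by
      funext x
      rw [sq_sqrt hpos.le, add_sub_assoc]
    rw [hfun]
    refine ⟨integrable_one_div_sq_add_sq_sq ha.ne', ?_⟩
    rw [integral_one_div_sq_add_sq_sq ha]
    ring
  have hmeas : AEStronglyMeasurable (fun p : ℝ × ℝ => 1 / (p.1 ^ 2 + (p.2 + D) ^ 2 - 1) ^ 2)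
      (volume.prod (volume.restrict (Ioi 0))) :=
    Measurable.aestronglyMeasurable (by fun_prop)
  rw [show {p : ℝ × ℝ | 0 < p.2} = Prod.snd ⁻¹' Ioi 0 from rfl, Measure.volume_eq_prod,
    Measure.prod_restrict_snd_preimage,
    integral_prod_eq_integral_of_slices hmeas (fun p => by positivity)
      (ae_restrict_of_forall_mem measurableSet_Ioi hslice) (houter_int.const_mul _),
    integral_const_mul, houter]
  have hs : 0 < √(D ^ 2 - 1) := sqrt_pos.2 (by nlinarith)
  field_simp
end

section
/- Let f : closed unit ball B̄ⁿ → ℝ be continuous, C¹ in the open ball, and suppose that as ξ → Sⁿ⁻¹, f(ξ) = f₀(ξ/|ξ|) + g_{ξ/|ξ|}(1-|ξ|) f₁(ξ/|ξ|) + o(g_{ξ/|ξ|}(1-|ξ|)), where g_σ : (0,1) → (0,∞) is increasing with g_σ(t) → 0 as t → 0. If f₁(ξ) > 0 at every point ξ ∈ Sⁿ⁻¹ where f₀ attains its global maximum, then f attains its maximum over B̄ⁿ at an interior point, and hence f has a critical point in the open ball Bⁿ. -/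
open Metric Set Filter

/-!
At a maximum point `σ` of `f` on the unit sphere, `f₀` is maximal too, so `f₁ σ > 0`. Moving
inward along the ray through `σ`, the expansion gives
`f((1 - t) σ) ≥ f₀ σ + g_σ(t) f₁ σ / 2 > f σ` for small `t > 0`. Hence no maximum of `f` over
the closed ball lies on the sphere, and an interior maximum is a critical point.
-/

variable {E : Type*} [NormedAddCommGroup E] [NormedSpace ℝ E]

/-- `f(ξ) = f₀(ξ/|ξ|) + g_{ξ/|ξ|}(1-|ξ|) f₁(ξ/|ξ|) + o(g_{ξ/|ξ|}(1-|ξ|))` as `|ξ| → 1⁻`,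
uniformly in the direction. -/
def HasRadialExpansion (f f₀ f₁ : E → ℝ) (g : E → ℝ → ℝ) : Prop :=
  ∀ ε > (0 : ℝ), ∃ δ > (0 : ℝ), ∀ ξ : E, ξ ≠ 0 → 1 - δ < ‖ξ‖ → ‖ξ‖ < 1 →
    |f ξ - f₀ ((1 / ‖ξ‖) • ξ) - g ((1 / ‖ξ‖) • ξ) (1 - ‖ξ‖) * f₁ ((1 / ‖ξ‖) • ξ)| ≤
      ε * g ((1 / ‖ξ‖) • ξ) (1 - ‖ξ‖)

lemma norm_one_sub_smul_of_norm_eq_one {σ : E} (hσ : ‖σ‖ = 1) {t : ℝ} (ht : t < 1) :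
    ‖(1 - t) • σ‖ = 1 - t := by
  rw [norm_smul, hσ, mul_one, Real.norm_of_nonneg (by linarith)]

namespace HasRadialExpansion

variable {f f₀ f₁ : E → ℝ} {g : E → ℝ → ℝ}

lemma along_ray (h : HasRadialExpansion f f₀ f₁ g) {σ : E} (hσ : ‖σ‖ = 1) {ε : ℝ}
    (hε : 0 < ε) :
    ∃ δ ∈ Ioc (0 : ℝ) 1, ∀ t ∈ Ioo 0 δ,
      |f ((1 - t) • σ) - f₀ σ - g σ t * f₁ σ| ≤ ε * g σ t := by
  obtain ⟨δ, hδ, hclose⟩ := h ε hε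
  refine ⟨min δ 1, ⟨by positivity, min_le_right δ 1⟩, fun t ⟨ht₀, ht⟩ => ?_⟩
  have htδ : t < δ := ht.trans_le (min_le_left δ 1)
  have ht₁ : t < 1 := ht.trans_le (min_le_right δ 1)
  have hnorm := norm_one_sub_smul_of_norm_eq_one hσ ht₁
  have hdir : (1 / ‖(1 - t) • σ‖) • (1 - t) • σ = σ := by
    rw [hnorm, smul_smul, one_div_mul_cancel (by linarith), one_smul]
  have hne : (1 - t) • σ ≠ 0 := norm_ne_zero_iff.1 (by rw [hnorm]; linarith)
  have := hclose _ hne (by rw [hnorm]; linarith) (by rw [hnorm]; linarith)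
  rwa [hdir, hnorm, sub_sub_cancel] at this

lemma exists_mem_closedBall_lt (h : HasRadialExpansion f f₀ f₁ g) {σ : E} (hσ : ‖σ‖ = 1)
    (hg : ∀ t ∈ Ioo (0 : ℝ) 1, 0 < g σ t) (hf₁ : 0 < f₁ σ) :
    ∃ ξ ∈ closedBall (0 : E) 1, f₀ σ < f ξ := by
  obtain ⟨δ, ⟨hδ₀, hδ₁⟩, hray⟩ := h.along_ray hσ (half_pos hf₁)
  have ht₀ : 0 < δ / 2 := half_pos hδ₀
  have htδ : δ / 2 < δ := half_lt_self hδ₀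
  have ht₁ : δ / 2 < 1 := htδ.trans_le hδ₁
  have hgt : 0 < g σ (δ / 2) := hg _ ⟨ht₀, ht₁⟩
  refine ⟨(1 - δ / 2) • σ, ?_, ?_⟩
  · rw [mem_closedBall_zero_iff, norm_one_sub_smul_of_norm_eq_one hσ ht₁]
    linarith
  · have := (abs_le.1 (hray _ ⟨ht₀, htδ⟩)).1
    nlinarith

end HasRadialExpansion

theorem max_attained_interior_general (n : ℕ)
    (f f₀ f₁ : EuclideanSpace ℝ (Fin n) → ℝ)
    (g : EuclideanSpace ℝ (Fin n) → ℝ → ℝ)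
    (hf : ContinuousOn f (closedBall 0 1))
    (hf_eq : ∀ σ ∈ sphere (0 : EuclideanSpace ℝ (Fin n)) 1, f σ = f₀ σ)
    (hg_pos : ∀ σ ∈ sphere (0 : EuclideanSpace ℝ (Fin n)) 1,
      ∀ t ∈ Ioo (0 : ℝ) 1, 0 < g σ t)
    (hexp : ∀ ε > (0 : ℝ), ∃ δ > (0 : ℝ), ∀ ξ : EuclideanSpace ℝ (Fin n),
      ξ ≠ 0 → 1 - δ < ‖ξ‖ → ‖ξ‖ < 1 →
      |f ξ - f₀ ((1 / ‖ξ‖) • ξ) - g ((1 / ‖ξ‖) • ξ) (1 - ‖ξ‖) * f₁ ((1 / ‖ξ‖) • ξ)| ≤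
        ε * g ((1 / ‖ξ‖) • ξ) (1 - ‖ξ‖))
    (hmax : ∀ ξ ∈ sphere (0 : EuclideanSpace ℝ (Fin n)) 1,
      (∀ η ∈ sphere (0 : EuclideanSpace ℝ (Fin n)) 1, f₀ η ≤ f₀ ξ) → 0 < f₁ ξ) :
    ∃ ξ₀ ∈ ball (0 : EuclideanSpace ℝ (Fin n)) 1,
      (∀ ξ ∈ closedBall (0 : EuclideanSpace ℝ (Fin n)) 1, f ξ ≤ f ξ₀) ∧
      fderiv ℝ f ξ₀ = 0 := by
  obtain ⟨ξ₀, hξ₀, hmaxOn⟩ := (isCompact_closedBall (0 : EuclideanSpace ℝ (Fin n)) 1).exists_isMaxOn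
    ⟨0, mem_closedBall_self zero_le_one⟩ hf
  have hint : ξ₀ ∈ ball 0 1 := by
    refine mem_ball_zero_iff.2 <| (mem_closedBall_zero_iff.1 hξ₀).lt_of_ne fun hσ => ?_
    have hsphere : ξ₀ ∈ sphere 0 1 := mem_sphere_zero_iff_norm.2 hσ
    have hf₁ : 0 < f₁ ξ₀ := hmax ξ₀ hsphere fun η hη => by
      rw [← hf_eq η hη, ← hf_eq ξ₀ hsphere]
      exact hmaxOn (sphere_subset_closedBall hη)
    obtain ⟨ξ, hξ, hlt⟩ :=
      HasRadialExpansion.exists_mem_closedBall_lt hexp hσ (hg_pos ξ₀ hsphere) hf₁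
    exact (hmaxOn hξ).not_gt (hf_eq ξ₀ hsphere ▸ hlt)
  exact ⟨ξ₀, hint, fun ξ hξ => hmaxOn hξ,
    (hmaxOn.isLocalMax (closedBall_mem_nhds_of_mem hint)).fderiv_eq_zero⟩

/-- If `f : B̄ⁿ → ℝ` is continuous on the closed ball, `C¹ in the open ball`, admits the
boundary expansion `f(ξ) = f₀(ξ/|ξ|) + g_{ξ/|ξ|}(1-|ξ|) f₁(ξ/|ξ|) + o(g_{ξ/|ξ|}(1-|ξ|))`
as `ξ → Sⁿ⁻¹`, and `f₁ > 0` at every global maximum point of `f₀` on the sphere, then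
`f` attains its maximum over the closed ball at an interior point, which is a critical
point of `f`. -/
theorem max_attained_interior (n : ℕ) (hn : 1 ≤ n)
    (f f₀ f₁ : EuclideanSpace ℝ (Fin n) → ℝ)
    (g : EuclideanSpace ℝ (Fin n) → ℝ → ℝ)
    (hf : ContinuousOn f (closedBall 0 1))
    (hf' : ContDiffOn ℝ 1 f (ball 0 1))
    (hf₀ : ContinuousOn f₀ (sphere 0 1))
    (hf_eq : ∀ σ ∈ sphere (0 : EuclideanSpace ℝ (Fin n)) 1, f σ = f₀ σ)
    (hg_pos : ∀ σ ∈ sphere (0 : EuclideanSpace ℝ (Fin n)) 1,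
      ∀ t ∈ Ioo (0 : ℝ) 1, 0 < g σ t)
    (hg_mono : ∀ σ ∈ sphere (0 : EuclideanSpace ℝ (Fin n)) 1,
      StrictMonoOn (g σ) (Ioo (0 : ℝ) 1))
    (hg_lim : ∀ σ ∈ sphere (0 : EuclideanSpace ℝ (Fin n)) 1,
      Tendsto (g σ) (nhdsWithin 0 (Ioi 0)) (nhds 0))
    (hexp : ∀ ε > (0 : ℝ), ∃ δ > (0 : ℝ), ∀ ξ : EuclideanSpace ℝ (Fin n),
      ξ ≠ 0 → 1 - δ < ‖ξ‖ → ‖ξ‖ < 1 →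
      |f ξ - f₀ ((1 / ‖ξ‖) • ξ) - g ((1 / ‖ξ‖) • ξ) (1 - ‖ξ‖) * f₁ ((1 / ‖ξ‖) • ξ)| ≤
        ε * g ((1 / ‖ξ‖) • ξ) (1 - ‖ξ‖))
    (hmax : ∀ ξ ∈ sphere (0 : EuclideanSpace ℝ (Fin n)) 1,
      (∀ η ∈ sphere (0 : EuclideanSpace ℝ (Fin n)) 1, f₀ η ≤ f₀ ξ) → 0 < f₁ ξ) :
    ∃ ξ₀ ∈ ball (0 : EuclideanSpace ℝ (Fin n)) 1,
      (∀ ξ ∈ closedBall (0 : EuclideanSpace ℝ (Fin n)) 1, f ξ ≤ f ξ₀) ∧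
      fderiv ℝ f ξ₀ = 0 :=
  max_attained_interior_general n f f₀ f₁ g hf hf_eq hg_pos hexp hmax
end
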